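/- arXiv:1902.01184 — 3 statements merged into one kernel-verified Lean document; each statement's English description precedes it below -/
import Mathlib

section
/- Let N, M be positive integers, P > 0, and θ = (α, φ, f, t) ∈ ℝ⁴ with α > 0. For n ∈ {0,…,N−1}, m ∈ {0,…,M−1}, let s_{n,m}(θ) = √P · α · exp(i(φ + 2πnf − 2πmt)), and define the 4×4 real Fisher information matrix I(θ) by [I(θ)]_{jk} = 2 Re Σ_{n,m} conj(∂s_{n,m}/∂θ_j)·(∂s_{n,m}/∂θ_k), with parameter ordering (α, φ, f, t). Then I(θ) equals the explicit matrix with rows: (2PNM, 0, 0, 0); (0, 2Pα²NM, 2πPα²MN(N−1), −2πPα²NM(M−1)); (0, 2πPα²MN(N−1), (2π)²Pα²MN(N−1)(2N−1)/3, −(2π)²Pα²N(N−1)M(M−1)/2); (0, −2πPα²NM(M−1), −(2π)²Pα²N(N−1)M(M−1)/2, (2π)²Pα²NM(M−1)(2M−1)/3). -/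
open Real Finset

/-- The noiseless OFDM radar observation `s_{n,m}(α,φ,f,t) = √P·α·exp(i(φ + 2πnf − 2πmt))`. -/
noncomputable def ofdmSig (P : ℝ) (α φ f t : ℝ) (n m : ℕ) : ℂ :=
  (Real.sqrt P : ℂ) * (α : ℂ) *
    Complex.exp (Complex.I * ((φ : ℂ) + 2 * (π : ℂ) * (n : ℂ) * (f : ℂ)
      - 2 * (π : ℂ) * (m : ℂ) * (t : ℂ)))

/-- Partial derivative of `s_{n,m}` with respect to the `j`-th parameter of
`θ = (α, φ, f, t)`. -/
noncomputable def ofdmDs (P : ℝ) (α φ f t : ℝ) (j : Fin 4) (n m : ℕ) : ℂ :=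
  match j with
  | 0 => deriv (fun a : ℝ => ofdmSig P a φ f t n m) α
  | 1 => deriv (fun p : ℝ => ofdmSig P α p f t n m) φ
  | 2 => deriv (fun fr : ℝ => ofdmSig P α φ fr t n m) f
  | 3 => deriv (fun ti : ℝ => ofdmSig P α φ f ti n m) t

/-- The 4×4 Fisher information matrix
`[I(θ)]_{jk} = 2 Re Σ_{n,m} conj(∂s_{n,m}/∂θ_j)·(∂s_{n,m}/∂θ_k)`. -/
noncomputable def ofdmFisher (N M : ℕ) (P : ℝ) (α φ f t : ℝ) :
    Matrix (Fin 4) (Fin 4) ℝ :=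
  Matrix.of fun j k =>
    2 * (∑ n ∈ Finset.range N, ∑ m ∈ Finset.range M,
      (starRingEnd ℂ) (ofdmDs P α φ f t j n m) * ofdmDs P α φ f t k n m).re

lemma hasDerivAt_cexp_linear (u v : ℂ) (x : ℝ) :
    HasDerivAt (fun y : ℝ => Complex.exp (u * y + v)) (u * Complex.exp (u * x + v)) x := by
  have h : HasDerivAt (fun y : ℝ => u * (y : ℂ) + v) u x := by
    simpa using ((Complex.ofRealCLM.hasDerivAt (x := x)).const_mul u).add_const v
  simpa [mul_comm] using h.cexp

lemma deriv_const_mul_cexp (c u v : ℂ) (x : ℝ) :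
    deriv (fun y : ℝ => c * Complex.exp (u * y + v)) x = c * u * Complex.exp (u * x + v) := by
  simpa [mul_assoc, mul_comm, mul_left_comm] using ((hasDerivAt_cexp_linear u v x).const_mul c).deriv

lemma deriv_mul_ofReal (c : ℂ) (x : ℝ) :
    deriv (fun y : ℝ => c * (y : ℂ)) x = c := by
  simpa using ((Complex.ofRealCLM.hasDerivAt (x := x)).const_mul c).deriv

noncomputable def ofdmE (φ f t : ℝ) (n m : ℕ) : ℂ :=
  Complex.exp (Complex.I * ((φ : ℂ) + 2 * (π : ℂ) * (n : ℂ) * (f : ℂ)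
      - 2 * (π : ℂ) * (m : ℂ) * (t : ℂ)))

noncomputable def ofdmCoef (P α : ℝ) (n m : ℕ) : Fin 4 → ℂ
  | 0 => (Real.sqrt P : ℂ)
  | 1 => (Real.sqrt P : ℂ) * α * Complex.I
  | 2 => (Real.sqrt P : ℂ) * α * (2 * π * n) * Complex.I
  | 3 => -((Real.sqrt P : ℂ) * α * (2 * π * m) * Complex.I)

lemma ofdmE_conj_mul (φ f t : ℝ) (n m : ℕ) :
    (starRingEnd ℂ) (ofdmE φ f t n m) * ofdmE φ f t n m = 1 := by
  unfold ofdmE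
  rw [← Complex.exp_conj, ← Complex.exp_add]
  rw [show (starRingEnd ℂ) (Complex.I * ((φ : ℂ) + 2 * (π : ℂ) * (n : ℂ) * (f : ℂ)
      - 2 * (π : ℂ) * (m : ℂ) * (t : ℂ))) + Complex.I * ((φ : ℂ) + 2 * (π : ℂ) * (n : ℂ) * (f : ℂ)
      - 2 * (π : ℂ) * (m : ℂ) * (t : ℂ)) = 0 by
    simp [map_mul, map_add, map_sub, Complex.conj_ofReal, Complex.conj_I, map_ofNat]]
  exact Complex.exp_zero

lemma ofdmDs_eq (P α φ f t : ℝ) (n m : ℕ) (j : Fin 4) :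
    ofdmDs P α φ f t j n m = ofdmCoef P α n m j * ofdmE φ f t n m := by
  fin_cases j
  · show deriv (fun a : ℝ => ofdmSig P a φ f t n m) α = _
    have h : (fun a : ℝ => ofdmSig P a φ f t n m)
        = fun a : ℝ => ((Real.sqrt P : ℂ) * ofdmE φ f t n m) * (a : ℂ) := by
      funext a; unfold ofdmSig ofdmE; ring
    rw [h, deriv_mul_ofReal]; unfold ofdmCoef; ring
  · show deriv (fun p : ℝ => ofdmSig P α p f t n m) φ = _
    have h : (fun p : ℝ => ofdmSig P α p f t n m)
        = fun p : ℝ => ((Real.sqrt P : ℂ) * α) *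
            Complex.exp (Complex.I * (p : ℂ) +
              (2 * (π : ℂ) * (n : ℂ) * (f : ℂ) - 2 * (π : ℂ) * (m : ℂ) * (t : ℂ)) * Complex.I) := by
      funext p; unfold ofdmSig; congr 1; ring
    rw [h, deriv_const_mul_cexp]
    unfold ofdmCoef ofdmE
    rw [show Complex.I * (φ : ℂ) +
        (2 * (π : ℂ) * (n : ℂ) * (f : ℂ) - 2 * (π : ℂ) * (m : ℂ) * (t : ℂ)) * Complex.I
        = Complex.I * ((φ : ℂ) + 2 * (π : ℂ) * (n : ℂ) * (f : ℂ)
          - 2 * (π : ℂ) * (m : ℂ) * (t : ℂ)) from by ring]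
  · show deriv (fun fr : ℝ => ofdmSig P α φ fr t n m) f = _
    have h : (fun fr : ℝ => ofdmSig P α φ fr t n m)
        = fun fr : ℝ => ((Real.sqrt P : ℂ) * α) *
            Complex.exp ((Complex.I * (2 * (π : ℂ) * (n : ℂ))) * (fr : ℂ) +
              (((φ : ℂ) - 2 * (π : ℂ) * (m : ℂ) * (t : ℂ)) * Complex.I)) := by
      funext fr; unfold ofdmSig; congr 1; ring
    rw [h, deriv_const_mul_cexp]
    unfold ofdmCoef ofdmE
    rw [show (Complex.I * (2 * (π : ℂ) * (n : ℂ))) * (f : ℂ) +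
        (((φ : ℂ) - 2 * (π : ℂ) * (m : ℂ) * (t : ℂ)) * Complex.I)
        = Complex.I * ((φ : ℂ) + 2 * (π : ℂ) * (n : ℂ) * (f : ℂ)
          - 2 * (π : ℂ) * (m : ℂ) * (t : ℂ)) from by ring]
    ring
  · show deriv (fun ti : ℝ => ofdmSig P α φ f ti n m) t = _
    have h : (fun ti : ℝ => ofdmSig P α φ f ti n m)
        = fun ti : ℝ => ((Real.sqrt P : ℂ) * α) *
            Complex.exp ((-(Complex.I * (2 * (π : ℂ) * (m : ℂ)))) * (ti : ℂ) +
              (((φ : ℂ) + 2 * (π : ℂ) * (n : ℂ) * (f : ℂ)) * Complex.I)) := by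
      funext ti; unfold ofdmSig; congr 1; ring
    rw [h, deriv_const_mul_cexp]
    unfold ofdmCoef ofdmE
    rw [show (-(Complex.I * (2 * (π : ℂ) * (m : ℂ)))) * (t : ℂ) +
        (((φ : ℂ) + 2 * (π : ℂ) * (n : ℂ) * (f : ℂ)) * Complex.I)
        = Complex.I * ((φ : ℂ) + 2 * (π : ℂ) * (n : ℂ) * (f : ℂ)
          - 2 * (π : ℂ) * (m : ℂ) * (t : ℂ)) from by ring]
    ring

lemma ofdm_prod (P α φ f t : ℝ) (n m : ℕ) (j k : Fin 4) :
    (starRingEnd ℂ) (ofdmDs P α φ f t j n m) * ofdmDs P α φ f t k n m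
      = (starRingEnd ℂ) (ofdmCoef P α n m j) * ofdmCoef P α n m k := by
  rw [ofdmDs_eq, ofdmDs_eq, map_mul]
  calc (starRingEnd ℂ) (ofdmCoef P α n m j) * (starRingEnd ℂ) (ofdmE φ f t n m) *
        (ofdmCoef P α n m k * ofdmE φ f t n m)
      = ((starRingEnd ℂ) (ofdmCoef P α n m j) * ofdmCoef P α n m k) *
        ((starRingEnd ℂ) (ofdmE φ f t n m) * ofdmE φ f t n m) := by ring
    _ = _ := by rw [ofdmE_conj_mul]; ring

lemma ofdm_sum_id (N : ℕ) : ∑ n ∈ range N, (n : ℝ) = N * (N - 1) / 2 := by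
  induction N with
  | zero => simp
  | succ k ih => rw [Finset.sum_range_succ, ih]; push_cast; ring

lemma ofdm_sum_sq (N : ℕ) : ∑ n ∈ range N, (n : ℝ) ^ 2 = N * (N - 1) * (2 * N - 1) / 6 := by
  induction N with
  | zero => simp
  | succ k ih => rw [Finset.sum_range_succ, ih]; push_cast; ring

lemma ofdm_dsum (N M : ℕ) (F G : ℕ → ℝ) :
    ∑ n ∈ range N, ∑ m ∈ range M, F n * G m
      = (∑ n ∈ range N, F n) * (∑ m ∈ range M, G m) :=
  (Finset.sum_mul_sum _ _ _ _).symm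

set_option maxHeartbeats 1600000 in
/-- Explicit form of the Fisher information matrix for the OFDM radar model with
constant envelope `A_{n,m} = √P` and parameters `θ = (α, φ, f, t)`. -/
theorem ofdm_fisher_matrix_explicit
    (N M : ℕ) (hN : 0 < N) (hM : 0 < M) (P : ℝ) (hP : 0 < P)
    (α φ f t : ℝ) (hα : 0 < α) :
    ofdmFisher N M P α φ f t =
      !![2 * P * N * M, 0, 0, 0;
         0, 2 * P * α ^ 2 * N * M,
            2 * π * P * α ^ 2 * M * N * (N - 1),
            -(2 * π * P * α ^ 2 * N * M * (M - 1));
         0, 2 * π * P * α ^ 2 * M * N * (N - 1),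
            (2 * π) ^ 2 * P * α ^ 2 * M * N * (N - 1) * (2 * N - 1) / 3,
            -((2 * π) ^ 2 * P * α ^ 2 * N * (N - 1) * M * (M - 1) / 2);
         0, -(2 * π * P * α ^ 2 * N * M * (M - 1)),
            -((2 * π) ^ 2 * P * α ^ 2 * N * (N - 1) * M * (M - 1) / 2),
            (2 * π) ^ 2 * P * α ^ 2 * N * M * (M - 1) * (2 * M - 1) / 3] := by
  have e00 : ∀ n m : ℕ, ((starRingEnd ℂ) (ofdmCoef P α n m 0) * ofdmCoef P α n m 0).re
      = P * 1 := by
    intro n m; simp [ofdmCoef]; ring_nf; rw [Real.sq_sqrt hP.le]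
  have e01 : ∀ n m : ℕ, ((starRingEnd ℂ) (ofdmCoef P α n m 0) * ofdmCoef P α n m 1).re
      = 0 := by intro n m; simp [ofdmCoef]
  have e10 : ∀ n m : ℕ, ((starRingEnd ℂ) (ofdmCoef P α n m 1) * ofdmCoef P α n m 0).re
      = 0 := by intro n m; simp [ofdmCoef]
  have e02 : ∀ n m : ℕ, ((starRingEnd ℂ) (ofdmCoef P α n m 0) * ofdmCoef P α n m 2).re
      = 0 := by intro n m; simp [ofdmCoef]
  have e20 : ∀ n m : ℕ, ((starRingEnd ℂ) (ofdmCoef P α n m 2) * ofdmCoef P α n m 0).re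
      = 0 := by intro n m; simp [ofdmCoef]
  have e03 : ∀ n m : ℕ, ((starRingEnd ℂ) (ofdmCoef P α n m 0) * ofdmCoef P α n m 3).re
      = 0 := by intro n m; simp [ofdmCoef]
  have e30 : ∀ n m : ℕ, ((starRingEnd ℂ) (ofdmCoef P α n m 3) * ofdmCoef P α n m 0).re
      = 0 := by intro n m; simp [ofdmCoef]
  have e11 : ∀ n m : ℕ, ((starRingEnd ℂ) (ofdmCoef P α n m 1) * ofdmCoef P α n m 1).re
      = (P * α ^ 2) * 1 := by
    intro n m; simp [ofdmCoef]; ring_nf; rw [Real.sq_sqrt hP.le]; ring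
  have e12 : ∀ n m : ℕ, ((starRingEnd ℂ) (ofdmCoef P α n m 1) * ofdmCoef P α n m 2).re
      = (P * α ^ 2 * (2 * π) * (n : ℝ)) * 1 := by
    intro n m; simp [ofdmCoef]; ring_nf; rw [Real.sq_sqrt hP.le]; ring
  have e21 : ∀ n m : ℕ, ((starRingEnd ℂ) (ofdmCoef P α n m 2) * ofdmCoef P α n m 1).re
      = (P * α ^ 2 * (2 * π) * (n : ℝ)) * 1 := by
    intro n m; simp [ofdmCoef]; ring_nf; rw [Real.sq_sqrt hP.le]; ring
  have e13 : ∀ n m : ℕ, ((starRingEnd ℂ) (ofdmCoef P α n m 1) * ofdmCoef P α n m 3).re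
      = (-(P * α ^ 2 * (2 * π))) * (m : ℝ) := by
    intro n m; simp [ofdmCoef]; ring_nf; rw [Real.sq_sqrt hP.le]; ring
  have e31 : ∀ n m : ℕ, ((starRingEnd ℂ) (ofdmCoef P α n m 3) * ofdmCoef P α n m 1).re
      = (-(P * α ^ 2 * (2 * π))) * (m : ℝ) := by
    intro n m; simp [ofdmCoef]; ring_nf; rw [Real.sq_sqrt hP.le]; ring
  have e22 : ∀ n m : ℕ, ((starRingEnd ℂ) (ofdmCoef P α n m 2) * ofdmCoef P α n m 2).re
      = (P * α ^ 2 * (2 * π) ^ 2 * (n : ℝ) ^ 2) * 1 := by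
    intro n m; simp [ofdmCoef]; ring_nf; rw [Real.sq_sqrt hP.le]; ring
  have e23 : ∀ n m : ℕ, ((starRingEnd ℂ) (ofdmCoef P α n m 2) * ofdmCoef P α n m 3).re
      = (-(P * α ^ 2 * (2 * π) ^ 2) * (n : ℝ)) * (m : ℝ) := by
    intro n m; simp [ofdmCoef]; ring_nf; rw [Real.sq_sqrt hP.le]; ring
  have e32 : ∀ n m : ℕ, ((starRingEnd ℂ) (ofdmCoef P α n m 3) * ofdmCoef P α n m 2).re
      = (-(P * α ^ 2 * (2 * π) ^ 2) * (n : ℝ)) * (m : ℝ) := by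
    intro n m; simp [ofdmCoef]; ring_nf; rw [Real.sq_sqrt hP.le]; ring
  have e33 : ∀ n m : ℕ, ((starRingEnd ℂ) (ofdmCoef P α n m 3) * ofdmCoef P α n m 3).re
      = (P * α ^ 2 * (2 * π) ^ 2) * (m : ℝ) ^ 2 := by
    intro n m; simp [ofdmCoef]; ring_nf; rw [Real.sq_sqrt hP.le]; ring
  have f0 : (⟨0, by norm_num⟩ : Fin 4) = 0 := rfl
  have f1 : (⟨1, by norm_num⟩ : Fin 4) = 1 := rfl
  have f2 : (⟨2, by norm_num⟩ : Fin 4) = 2 := rfl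
  have f3 : (⟨3, by norm_num⟩ : Fin 4) = 3 := rfl
  ext j k
  fin_cases j <;> fin_cases k
  all_goals (
    simp only [ofdmFisher, Matrix.of_apply, ofdm_prod, f0, f1, f2, f3, Complex.re_sum,
      e00, e01, e02, e03, e10, e11, e12, e13, e20, e21, e22, e23, e30, e31, e32, e33]
    try simp only [ofdm_dsum]
    try simp only [← Finset.mul_sum]
    try simp only [ofdm_sum_id, ofdm_sum_sq, Finset.sum_const, Finset.card_range,
      nsmul_eq_mul, Finset.sum_const_zero, mul_zero, zero_mul, mul_one]
    try simp [Matrix.vecHead, Matrix.vecTail]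
    try push_cast
    try ring)
end

section
/- Let N, M ≥ 2 be integers, P > 0, α > 0. With the Fisher information matrix I(θ) defined entrywise by [I(θ)]_{jk} = 2 Re Σ_{n=0}^{N−1} Σ_{m=0}^{M−1} conj(∂s_{n,m}/∂θ_j)·(∂s_{n,m}/∂θ_k) for s_{n,m}(θ) = √P·α·exp(i(φ + 2πnf − 2πmt)) and θ = (α, φ, f, t), the 2×2 block B = [[I_{φφ}, I_{φt}],[I_{tφ}, I_{tt}]] is invertible, and the Schur complement of the (f,f) entry with respect to the nuisance parameters (φ, t), namely I_{ff} − (I_{fφ}, I_{ft}) B⁻¹ (I_{φf}, I_{tf})ᵀ, equals (2π)² P α² M N (N² − 1) / 6. -/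
open Real Finset

/-! For each phase parameter, `∂s/∂θ_j = i w_j s` with a real weight `w_φ = 1`, `w_f = 2πn`,
`w_t = -2πm`, and `|s|² = Pα²`; hence the `(φ, f, t)` block of the Fisher matrix is `2Pα²` times
the Gram matrix of these weights over the `N × M` grid. Each weight is a function of `n` times a
function of `m`, so every entry factors as a sum over `n` times a sum over `m`. With that structure
the delay decouples in the Schur complement, and eliminating the phase leaves `2Pα² M` times the
spread `∑ₙ (2πn - mean)² = (2π)² N (N² - 1) / 12` of the Doppler weights. -/

theorem HasDerivAt.const_mul_cexp_I_mul {g : ℝ → ℝ} {w x : ℝ} (A : ℂ) (hg : HasDerivAt g w x) :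
    HasDerivAt (fun y => A * Complex.exp (Complex.I * g y))
      (w * (Complex.I * (A * Complex.exp (Complex.I * g x)))) x :=
  ((hg.ofReal_comp.const_mul Complex.I).cexp.const_mul A).congr_deriv (by ring)

theorem ofdmSig_eq_mul_cexp (P α φ f t : ℝ) (n m : ℕ) :
    ofdmSig P α φ f t n m = (Real.sqrt P * α : ℂ) *
      Complex.exp (Complex.I * ((φ + 2 * π * n * f - 2 * π * m * t : ℝ) : ℂ)) := by
  simp [ofdmSig]

theorem ofdmSig_normSq {P : ℝ} (hP : 0 ≤ P) (α φ f t : ℝ) (n m : ℕ) :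
    Complex.normSq (ofdmSig P α φ f t n m) = P * α ^ 2 := by
  rw [ofdmSig_eq_mul_cexp, Complex.normSq_eq_norm_sq, norm_mul, Complex.norm_exp_I_mul_ofReal,
    mul_one, ← Complex.ofReal_mul, Complex.norm_real, Real.norm_eq_abs, sq_abs, mul_pow,
    Real.sq_sqrt hP]

section Derivatives

variable (P α φ f t : ℝ) (n m : ℕ)

theorem ofdmDs_phase :
    ofdmDs P α φ f t 1 n m = (1 : ℝ) * (Complex.I * ofdmSig P α φ f t n m) := by
  simp only [ofdmDs, ofdmSig_eq_mul_cexp]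
  exact (((hasDerivAt_id φ).add_const _).sub_const _ |>.const_mul_cexp_I_mul _).deriv

theorem ofdmDs_doppler :
    ofdmDs P α φ f t 2 n m = (2 * π * n : ℝ) * (Complex.I * ofdmSig P α φ f t n m) := by
  simp only [ofdmDs, ofdmSig_eq_mul_cexp]
  refine (HasDerivAt.const_mul_cexp_I_mul _ ?_).deriv
  simpa using (((hasDerivAt_id f).const_mul (2 * π * n)).const_add φ).sub_const (2 * π * m * t)

theorem ofdmDs_delay :
    ofdmDs P α φ f t 3 n m = (-(2 * π) * m : ℝ) * (Complex.I * ofdmSig P α φ f t n m) := by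
  simp only [ofdmDs, ofdmSig_eq_mul_cexp]
  refine (HasDerivAt.const_mul_cexp_I_mul _ ?_).deriv
  simpa using ((hasDerivAt_id t).const_mul (2 * π * m)).const_sub (φ + 2 * π * n * f)

end Derivatives

theorem ofdmFisher_apply_of_ofdmDs_eq {N M : ℕ} {P : ℝ} (hP : 0 ≤ P) {α φ f t : ℝ} {j k : Fin 4}
    {a b : ℕ → ℕ → ℝ}
    (hj : ∀ n m, ofdmDs P α φ f t j n m = a n m * (Complex.I * ofdmSig P α φ f t n m))
    (hk : ∀ n m, ofdmDs P α φ f t k n m = b n m * (Complex.I * ofdmSig P α φ f t n m)) :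
    ofdmFisher N M P α φ f t j k
      = 2 * (P * α ^ 2) * ∑ n ∈ range N, ∑ m ∈ range M, a n m * b n m := by
  have hterm : ∀ n m, (starRingEnd ℂ) (ofdmDs P α φ f t j n m) * ofdmDs P α φ f t k n m
      = ((a n m * b n m * (P * α ^ 2) : ℝ) : ℂ) := by
    intro n m
    rw [hj, hk, ← ofdmSig_normSq hP α φ f t n m]
    push_cast
    rw [Complex.normSq_eq_conj_mul_self]
    simp only [map_mul, Complex.conj_ofReal, Complex.conj_I]
    linear_combination -(a n m * b n m * (starRingEnd ℂ) (ofdmSig P α φ f t n m) *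
      ofdmSig P α φ f t n m) * Complex.I_mul_I
  simp only [ofdmFisher, Matrix.of_apply, hterm, ← Complex.ofReal_sum, Complex.ofReal_re,
    ← sum_mul]
  ring

theorem ofdmFisher_isSymm (N M : ℕ) (P α φ f t : ℝ) : (ofdmFisher N M P α φ f t).IsSymm := by
  refine Matrix.IsSymm.ext fun j k => ?_
  simp only [ofdmFisher, Matrix.of_apply]
  rw [← Complex.conj_re, map_sum]
  simp [map_sum, mul_comm]

section Entries

variable {N M : ℕ} {P α φ f t : ℝ}

theorem ofdmFisher_phase_phase (hP : 0 ≤ P) :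
    ofdmFisher N M P α φ f t 1 1 = 2 * (P * α ^ 2) * (N * M) := by
  simp [ofdmFisher_apply_of_ofdmDs_eq hP (ofdmDs_phase P α φ f t) (ofdmDs_phase P α φ f t)]

theorem ofdmFisher_phase_doppler (hP : 0 ≤ P) :
    ofdmFisher N M P α φ f t 1 2 = 2 * (P * α ^ 2) * (M * ∑ n ∈ range N, 2 * π * n) := by
  simp [ofdmFisher_apply_of_ofdmDs_eq hP (ofdmDs_phase P α φ f t) (ofdmDs_doppler P α φ f t),
    mul_sum]

theorem ofdmFisher_phase_delay (hP : 0 ≤ P) :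
    ofdmFisher N M P α φ f t 1 3 = 2 * (P * α ^ 2) * (N * ∑ m ∈ range M, -(2 * π) * m) := by
  simp [ofdmFisher_apply_of_ofdmDs_eq hP (ofdmDs_phase P α φ f t) (ofdmDs_delay P α φ f t)]

theorem ofdmFisher_doppler_doppler (hP : 0 ≤ P) :
    ofdmFisher N M P α φ f t 2 2 = 2 * (P * α ^ 2) * (M * ∑ n ∈ range N, (2 * π * n) ^ 2) := by
  simp [ofdmFisher_apply_of_ofdmDs_eq hP (ofdmDs_doppler P α φ f t) (ofdmDs_doppler P α φ f t),
    mul_sum, sq]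

theorem ofdmFisher_doppler_delay (hP : 0 ≤ P) :
    ofdmFisher N M P α φ f t 2 3 =
      2 * (P * α ^ 2) * ((∑ n ∈ range N, 2 * π * n) * ∑ m ∈ range M, -(2 * π) * m) := by
  simp [ofdmFisher_apply_of_ofdmDs_eq hP (ofdmDs_doppler P α φ f t) (ofdmDs_delay P α φ f t),
    sum_mul_sum]

theorem ofdmFisher_delay_delay (hP : 0 ≤ P) :
    ofdmFisher N M P α φ f t 3 3 =
      2 * (P * α ^ 2) * (N * ∑ m ∈ range M, (-(2 * π) * m) ^ 2) := by
  simp [ofdmFisher_apply_of_ofdmDs_eq hP (ofdmDs_delay P α φ f t) (ofdmDs_delay P α φ f t), sq]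

end Entries

theorem Matrix.inv_fin_two_of {K : Type*} [Field K] (a b c d : K) :
    (!![a, b; c, d])⁻¹ = (a * d - b * c)⁻¹ • !![d, -b; -c, a] := by
  rw [Matrix.inv_def, Matrix.adjugate_fin_two_of, Matrix.det_fin_two_of, Ring.inverse_eq_inv]

/-! `c` times the Gram matrix of three weight functions `(1, x n, 1)` and `(1, 1, y m)` on a grid of
`N × M` points, where `X, X₂` are the sums of `x, x²` over the first axis and `Y, Y₂` those of
`y, y²` over the second. -/

section SeparableGram

variable {c N M X X₂ Y Y₂ : ℝ}

theorem isUnit_det_separableGram (hc : c ≠ 0) (hN : N ≠ 0) (hY : M * Y₂ - Y ^ 2 ≠ 0) :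
    IsUnit (!![c * (N * M), c * (N * Y); c * (N * Y), c * (N * Y₂)]).det := by
  rw [Matrix.det_fin_two_of, isUnit_iff_ne_zero]
  convert mul_ne_zero (mul_ne_zero (pow_ne_zero 2 hc) (pow_ne_zero 2 hN)) hY using 1
  ring

theorem schurComplement_separableGram (hc : c ≠ 0) (hN : N ≠ 0) (hY : M * Y₂ - Y ^ 2 ≠ 0) :
    c * (M * X₂) - dotProduct ![c * (M * X), c * (X * Y)]
        ((!![c * (N * M), c * (N * Y); c * (N * Y), c * (N * Y₂)])⁻¹.mulVec
          ![c * (M * X), c * (X * Y)])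
      = c * M * (N * X₂ - X ^ 2) / N := by
  rw [Matrix.inv_fin_two_of]
  simp only [dotProduct, Matrix.mulVec, Fin.sum_univ_two, Matrix.cons_val_zero,
    Matrix.cons_val_one, Matrix.cons_val_fin_one, Matrix.smul_apply, Matrix.of_apply,
    smul_eq_mul]
  field_simp
  ring

end SeparableGram

theorem card_mul_sum_sq_sub_sq_sum_range (N : ℕ) (s : ℝ) :
    N * ∑ n ∈ range N, (s * n) ^ 2 - (∑ n ∈ range N, s * n) ^ 2
      = s ^ 2 * N ^ 2 * (N ^ 2 - 1) / 12 := by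
  have h : ∑ n ∈ range N, (n : ℝ) = N * (N - 1) / 2 ∧
      ∑ n ∈ range N, (n : ℝ) ^ 2 = N * (N - 1) * (2 * N - 1) / 6 := by
    induction N with
    | zero => simp
    | succ k ih =>
      simp only [sum_range_succ, ih.1, ih.2]
      push_cast
      constructor <;> ring
  simp only [mul_pow, ← mul_sum, h.1, h.2]
  ring

/-- Effective Fisher information for the normalized Doppler `f` after eliminating
the nuisance parameters `(φ, t)`: the 2×2 nuisance block is invertible and the
Schur complement of the `(f,f)` entry equals `(2π)² P α² M N (N² − 1) / 6`. -/
theorem ofdm_schur_complement_doppler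
    (N M : ℕ) (hN : 2 ≤ N) (hM : 2 ≤ M) (P : ℝ) (hP : 0 < P)
    (α φ f t : ℝ) (hα : 0 < α) :
    let Inf := ofdmFisher N M P α φ f t
    let B : Matrix (Fin 2) (Fin 2) ℝ := !![Inf 1 1, Inf 1 3; Inf 3 1, Inf 3 3]
    IsUnit B.det ∧
    Inf 2 2 - dotProduct ![Inf 2 1, Inf 2 3] (B⁻¹.mulVec ![Inf 1 2, Inf 3 2]) =
      (2 * π) ^ 2 * P * α ^ 2 * M * N * ((N : ℝ) ^ 2 - 1) / 6 := by
  intro Inf B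
  have hc : 2 * (P * α ^ 2) ≠ 0 := by positivity
  have hN₀ : (N : ℝ) ≠ 0 := Nat.cast_ne_zero.mpr (by omega)
  have hY : M * ∑ m ∈ range M, (-(2 * π) * m) ^ 2 - (∑ m ∈ range M, -(2 * π) * (m : ℝ)) ^ 2
      ≠ 0 := by
    have hM₀ : M ≠ 0 := by omega
    have hM₁ : (M : ℝ) ^ 2 - 1 ≠ 0 := by
      have : (2 : ℝ) ≤ M := by exact_mod_cast hM
      nlinarith
    rw [card_mul_sum_sq_sub_sq_sum_range]
    simp [pi_ne_zero, hM₀, hM₁]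
  simp only [B, Inf, (ofdmFisher_isSymm ..).apply 1 2, (ofdmFisher_isSymm ..).apply 1 3,
    (ofdmFisher_isSymm ..).apply 2 3, ofdmFisher_phase_phase hP.le,
    ofdmFisher_phase_doppler hP.le, ofdmFisher_phase_delay hP.le,
    ofdmFisher_doppler_doppler hP.le, ofdmFisher_doppler_delay hP.le,
    ofdmFisher_delay_delay hP.le]
  refine ⟨isUnit_det_separableGram hc hN₀ hY, ?_⟩
  rw [schurComplement_separableGram hc hN₀ hY, card_mul_sum_sq_sub_sq_sum_range]
  field_simp
  ring
end

section
/- Let T > 0, let g : ℝ → ℂ be the indicator function of [0, T], and let C(τ, ν) = ∫_ℝ g(t)·conj(g(t − τ))·e^{−i2πνt} dt. Let τ ∈ ℝ with 0 < τ < T and let n, n' be integers. If C((n − n')T − τ, ν) ≠ 0 for some ν ∈ ℝ, then n' = n or n' = n − 1. -/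
open Real MeasureTheory

/-- With rectangular pulses of duration `T` and a path delay `0 < τ < T`, the
cross-ambiguity factor `C((n − n')T − τ, ν)` in the OTFS time-frequency channel
can be nonzero only for `n' = n` or `n' = n − 1`. -/
theorem otfs_isi_adjacent_slots_only
    (T : ℝ) (hT : 0 < T)
    (g : ℝ → ℂ) (hg : g = Set.indicator (Set.Icc 0 T) (fun _ => (1 : ℂ)))
    (C : ℝ → ℝ → ℂ)
    (hC : ∀ τ ν : ℝ, C τ ν = ∫ t : ℝ, g t * (starRingEnd ℂ) (g (t - τ)) *
      Complex.exp (-(Complex.I * (2 * π * ν * t))))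
    (τ : ℝ) (hτ0 : 0 < τ) (hτT : τ < T)
    (n n' : ℤ)
    (hnz : ∃ ν : ℝ, C (((n : ℝ) - (n' : ℝ)) * T - τ) ν ≠ 0) :
    n' = n ∨ n' = n - 1 := by
  by_contra h
  push_neg at h
  obtain ⟨h1, h2⟩ := h
  obtain ⟨ν, hν⟩ := hnz
  apply hν
  rw [hC]
  set s : ℝ := ((n : ℝ) - (n' : ℝ)) * T - τ with hs
  have hk : (n : ℝ) - (n' : ℝ) = ((n - n' : ℤ) : ℝ) := by push_cast; ring
  -- either s > T or s < -T
  have hcase : T < s ∨ s < -T := by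
    rcases lt_or_ge (n - n') 2 with hlt | hge
    · right
      have : n - n' ≤ -1 := by omega
      have : ((n - n' : ℤ) : ℝ) ≤ -1 := by exact_mod_cast this
      have hle : ((n : ℝ) - (n' : ℝ)) * T ≤ -T := by
        rw [hk]
        nlinarith
      rw [hs]; linarith
    · left
      have : ((n - n' : ℤ) : ℝ) ≥ 2 := by exact_mod_cast hge
      have hle : ((n : ℝ) - (n' : ℝ)) * T ≥ 2 * T := by
        rw [hk]; nlinarith
      rw [hs]; linarith
  have hzero : ∀ t : ℝ, g t * (starRingEnd ℂ) (g (t - s)) *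
      Complex.exp (-(Complex.I * (2 * π * ν * t))) = 0 := by
    intro t
    rcases Classical.em (t ∈ Set.Icc (0:ℝ) T) with ht | ht
    · have : g (t - s) = 0 := by
        rw [hg]
        apply Set.indicator_of_notMem
        rcases hcase with hc | hc
        · intro hm
          have := hm.1
          have := ht.2
          simp only [Set.mem_Icc] at *
          linarith
        · intro hm
          have := hm.2
          have := ht.1
          simp only [Set.mem_Icc] at *
          linarith
      simp [this]
    · have : g t = 0 := by rw [hg]; exact Set.indicator_of_notMem ht _
      simp [this]
  simp only [hzero]
  simp
end
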